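/- arXiv:1903.00800 — 7 statements merged into one kernel-verified Lean document; each statement's English description precedes it below -/
import Mathlib

section
/- Let d ≥ 2 and let g : ℝ/ℤ → ℝ/ℤ be a continuous degree d circle map which is piecewise affine with slopes taking only two values λ > 1 and 0. Then g has at least d − 1 fixed points p at which g is not locally constant (semi-repelling fixed points). -/
/-- A continuous degree `d ≥ 2` circle map (given via its lift `G`)
which is piecewise affine with slopes `lam > 1` and `0` has at least `d - 1`
semi-repelling fixed points. -/
theorem stmt0 (d : ℕ) (hd : 2 ≤ d) (lam : ℝ) (hlam : 1 < lam)
    (G : ℝ → ℝ) (hGc : Continuous G) (hGdeg : ∀ t, G (t + 1) = G t + d)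
    (m : ℕ) (hm : 0 < m) (t : ℕ → ℝ) (ht0 : t 0 = 0) (htm : t m = 1)
    (hmono : StrictMonoOn t (Set.Iic m))
    (haff : ∀ i < m,
      (∀ x ∈ Set.Icc (t i) (t (i + 1)), G x = G (t i) + lam * (x - t i)) ∨
      (∀ x ∈ Set.Icc (t i) (t (i + 1)), G x = G (t i))) :
    ∃ S : Finset ℝ, d - 1 ≤ S.card ∧ ∀ p ∈ S,
      p ∈ Set.Ico (0 : ℝ) 1 ∧ (∃ j : ℤ, G p = p + j) ∧
      ¬ ∃ ε > 0, ∀ x, |x - p| < ε → G x = G p := by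
  classical
  set H : ℝ → ℝ := fun x => G x - x with hHdef
  have hHc : Continuous H := hGc.sub continuous_id
  have hH1 : H 1 = H 0 + ((d : ℝ) - 1) := by
    have h := hGdeg 0
    simp only [zero_add] at h
    simp only [hHdef, h]
    ring
  have key : ∀ k : ℕ, ∃ p : ℝ, k < d - 1 →
      p ∈ Set.Ico (0 : ℝ) 1 ∧ H p = (⌈H 0⌉ : ℝ) + k ∧
      ¬ ∃ ε > 0, ∀ x, |x - p| < ε → G x = G p := by
    intro k
    by_cases hk : k < d - 1
    · set c : ℝ := (⌈H 0⌉ : ℝ) + k with hc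
      have hkd : (k : ℝ) + 2 ≤ (d : ℝ) := by
        have : k + 2 ≤ d := by omega
        exact_mod_cast this
      have hc0 : H 0 ≤ c := by
        have := Int.le_ceil (H 0)
        have hk0 : (0:ℝ) ≤ (k:ℝ) := Nat.cast_nonneg k
        rw [hc]; linarith
      have hc1 : c < H 1 := by
        have := Int.ceil_lt_add_one (H 0)
        rw [hH1, hc]
        linarith
      set A : Set ℝ := Set.Icc (0:ℝ) 1 ∩ H ⁻¹' {c} with hA
      have hAc : IsClosed A := isClosed_Icc.inter (isClosed_singleton.preimage hHc)
      have hAne : A.Nonempty := by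
        have hsub := intermediate_value_Icc (by norm_num : (0:ℝ) ≤ 1) hHc.continuousOn
        obtain ⟨x, hx, hxc⟩ := hsub ⟨hc0, le_of_lt hc1⟩
        exact ⟨x, hx, hxc⟩
      have hAbdd : BddAbove A := ⟨1, fun x hx => hx.1.2⟩
      set p : ℝ := sSup A with hp
      have hpA : p ∈ A := hAc.csSup_mem hAne hAbdd
      have hpIcc : p ∈ Set.Icc (0:ℝ) 1 := hpA.1
      have hHp : H p = c := hpA.2
      have hp1 : p < 1 := by
        rcases lt_or_eq_of_le hpIcc.2 with h | h
        · exact h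
        · exfalso; rw [h] at hHp; linarith
      have hgt : ∀ x, p < x → x ≤ 1 → c < H x := by
        intro x hpx hx1
        by_contra hcon
        push_neg at hcon
        have hne : H x ≠ c := by
          intro hcx
          have hxA : x ∈ A := ⟨⟨le_trans hpIcc.1 (le_of_lt hpx), hx1⟩, hcx⟩
          exact absurd (le_csSup hAbdd hxA) (not_le.mpr hpx)
        have hlt : H x < c := lt_of_le_of_ne hcon hne
        have hsub := intermediate_value_Icc hx1 hHc.continuousOn
        obtain ⟨y, hy, hyc⟩ := hsub ⟨le_of_lt hlt, le_of_lt hc1⟩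
        have hyA : y ∈ A :=
          ⟨⟨le_trans hpIcc.1 (le_of_lt (lt_of_lt_of_le hpx hy.1)), hy.2⟩, hyc⟩
        have := le_csSup hAbdd hyA
        linarith [hy.1]
      refine ⟨p, fun _ => ⟨⟨hpIcc.1, hp1⟩, hHp, ?_⟩⟩
      rintro ⟨ε, hε, hloc⟩
      set x : ℝ := p + min ε (1 - p) / 2 with hx
      have hmin : 0 < min ε (1 - p) := lt_min hε (by linarith)
      have hpx : p < x := by rw [hx]; linarith
      have hx1 : x ≤ 1 := by
        have := min_le_right ε (1 - p)
        rw [hx]; linarith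
      have hxp : |x - p| < ε := by
        have h1 : min ε (1 - p) ≤ ε := min_le_left _ _
        rw [hx, add_sub_cancel_left, abs_of_pos (by linarith)]
        linarith
      have hGx : G x = G p := hloc x hxp
      have hHx : H x = G p - x := by simp [hHdef, hGx]
      have hHpe : H p = G p - p := by simp [hHdef]
      have : H x < c := by rw [hHx]; rw [hHpe] at hHp; linarith
      linarith [hgt x hpx hx1]
    · exact ⟨0, fun h => absurd h hk⟩
  choose p hp using key
  refine ⟨(Finset.range (d-1)).image p, ?_, ?_⟩
  · rw [Finset.card_image_of_injOn, Finset.card_range]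
    intro a ha b hb hab
    simp only [Finset.coe_range, Set.mem_Iio] at ha hb
    have h1 := (hp a ha).2.1
    have h2 := (hp b hb).2.1
    rw [hab, h2] at h1
    have : (a : ℝ) = b := by linarith
    exact_mod_cast this
  · intro q hq
    simp only [Finset.mem_image, Finset.mem_range] at hq
    obtain ⟨k, hk, rfl⟩ := hq
    obtain ⟨h1, h2, h3⟩ := hp k hk
    refine ⟨h1, ⟨⌈H 0⌉ + k, ?_⟩, h3⟩
    have h2' : G (p k) - p k = (⌈H 0⌉ : ℝ) + k := h2
    push_cast
    linarith
end

section
/- Let d ≥ 2 and f : ℝ/ℤ → ℝ/ℤ be a continuous monotone (degree-preserving, orientation-preserving) circle map of degree d, and let x₀ be a fixed point of f. Then there is at most one continuous monotone degree 1 map ξ : ℝ/ℤ → ℝ/ℤ with ξ(x₀) = 0 satisfying ξ ∘ f = m_d ∘ ξ, where m_d(θ) = dθ (mod 1). Consequently, any two semiconjugacies ξ₁, ξ₂ between f and m_d with ξ₁(x₀), ξ₂(x₀) fixed points of m_d differ by a rotation θ ↦ θ + j/(d−1) (mod 1) for some integer j. -/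
/-- A continuous integer-valued function on `ℝ` is constant. -/
lemma int_valued_const (g : ℝ → ℝ) (hg : Continuous g)
    (hints : ∀ x, ∃ n : ℤ, g x = n) : ∀ x, g x = g 0 := by
  intro x
  by_contra hne
  obtain ⟨m, hm⟩ := hints x
  obtain ⟨n, hn⟩ := hints 0
  have hmn : m ≠ n := by
    intro h; apply hne; rw [hm, hn, h]
  -- produce a non-integer value by IVT
  have key : ∀ a b : ℤ, a < b → (a : ℝ) = g x ∨ (a:ℝ) = g 0 → ((b:ℝ) = g x ∨ (b:ℝ) = g 0) → False := by
    intro a b hab ha hb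
    have hmem : ((a : ℝ) + 1/2) ∈ Set.range g := by
      have h1 : (a:ℝ) + 1 ≤ b := by exact_mod_cast hab
      rcases ha with ha | ha <;> rcases hb with hb | hb
      · exact absurd (hb ▸ ha) (by push_neg; exact_mod_cast hab.ne)
      · exact intermediate_value_univ x 0 hg ⟨by rw [← ha]; linarith, by rw [← hb]; linarith⟩
      · exact intermediate_value_univ 0 x hg ⟨by rw [← ha]; linarith, by rw [← hb]; linarith⟩
      · exact absurd (hb ▸ ha) (by push_neg; exact_mod_cast hab.ne)
    obtain ⟨z, hz⟩ := hmem
    obtain ⟨k, hk⟩ := hints z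
    rw [hk] at hz
    have : (2*k : ℝ) = 2*a + 1 := by rw [hz]; ring
    have : (2*k : ℤ) = 2*a + 1 := by exact_mod_cast this
    omega
  rcases hmn.lt_or_gt with h | h
  · exact key m n h (Or.inl hm.symm) (Or.inr hn.symm)
  · exact key n m h (Or.inr hn.symm) (Or.inl hm.symm)

lemma coe_int_exists {x : ℝ} (h : (x : AddCircle (1:ℝ)) = 0) : ∃ n : ℤ, x = n := by
  rcases (AddCircle.coe_eq_zero_iff _).1 h with ⟨n, hn⟩
  exact ⟨n, by simpa using hn.symm⟩

lemma coe_int_zero (n : ℤ) : ((n : ℝ) : AddCircle (1:ℝ)) = 0 := by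
  rw [AddCircle.coe_eq_zero_iff]
  exact ⟨n, by simp⟩

/-- Uniqueness (up to rotation by `j/(d-1)`) of the semiconjugacy
between a monotone degree `d` circle map `f` with fixed point `x₀` and the
multiplication map `m_d`. Circle maps are given together with their monotone lifts. -/
theorem stmt1 (d : ℕ) (hd : 2 ≤ d)
    (f : AddCircle (1:ℝ) → AddCircle (1:ℝ))
    (F : ℝ → ℝ) (hFc : Continuous F) (hFm : Monotone F)
    (hFdeg : ∀ x, F (x + 1) = F x + d)
    (hFlift : ∀ x : ℝ, f (x : AddCircle (1:ℝ)) = ((F x : ℝ) : AddCircle (1:ℝ)))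
    (x₀ : AddCircle (1:ℝ)) (hx₀ : f x₀ = x₀)
    (ξ₁ ξ₂ : AddCircle (1:ℝ) → AddCircle (1:ℝ))
    (Ξ₁ Ξ₂ : ℝ → ℝ)
    (h1c : Continuous Ξ₁) (h1m : Monotone Ξ₁) (h1deg : ∀ x, Ξ₁ (x + 1) = Ξ₁ x + 1)
    (h1lift : ∀ x : ℝ, ξ₁ (x : AddCircle (1:ℝ)) = ((Ξ₁ x : ℝ) : AddCircle (1:ℝ)))
    (h1surj : Function.Surjective ξ₁)
    (h2c : Continuous Ξ₂) (h2m : Monotone Ξ₂) (h2deg : ∀ x, Ξ₂ (x + 1) = Ξ₂ x + 1)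
    (h2lift : ∀ x : ℝ, ξ₂ (x : AddCircle (1:ℝ)) = ((Ξ₂ x : ℝ) : AddCircle (1:ℝ)))
    (h2surj : Function.Surjective ξ₂)
    (hsc1 : ∀ θ, ξ₁ (f θ) = d • ξ₁ θ) (hsc2 : ∀ θ, ξ₂ (f θ) = d • ξ₂ θ)
    (hfix1 : d • ξ₁ x₀ = ξ₁ x₀) (hfix2 : d • ξ₂ x₀ = ξ₂ x₀) :
    (ξ₁ x₀ = 0 → ξ₂ x₀ = 0 → ξ₁ = ξ₂) ∧
    ∃ j : ℤ, ∀ θ, ξ₁ θ = ξ₂ θ + (((j : ℝ) / ((d : ℝ) - 1) : ℝ) : AddCircle (1:ℝ)) := by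
  have hd1 : (1:ℝ) < d := by exact_mod_cast hd.trans_lt' one_lt_two
  have hdne : (d:ℝ) - 1 ≠ 0 := by linarith
  -- the semiconjugacy on lifts holds up to an integer constant
  have key : ∀ (Ξ : ℝ → ℝ) (ξ : AddCircle (1:ℝ) → AddCircle (1:ℝ)),
      (∀ x : ℝ, ξ (x : AddCircle (1:ℝ)) = ((Ξ x : ℝ) : AddCircle (1:ℝ))) →
      (∀ θ, ξ (f θ) = d • ξ θ) →
      ∀ x : ℝ, ∃ n : ℤ, Ξ (F x) - d * Ξ x = n := by
    intro Ξ ξ hlift hsc x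
    have h := hsc (x : AddCircle (1:ℝ))
    rw [hFlift, hlift, hlift] at h
    have hs : d • ((Ξ x : ℝ) : AddCircle (1:ℝ)) = (((d:ℝ) * Ξ x : ℝ) : AddCircle (1:ℝ)) := by
      rw [← AddCircle.coe_nsmul]; norm_num [nsmul_eq_mul]
    rw [hs] at h
    apply coe_int_exists
    rw [AddCircle.coe_sub, h, sub_self]
  obtain ⟨k₁, hk₁⟩ : ∃ k : ℤ, ∀ x, Ξ₁ (F x) = d * Ξ₁ x + k := by
    obtain ⟨k, hk⟩ := key Ξ₁ ξ₁ h1lift hsc1 0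
    refine ⟨k, fun x => ?_⟩
    have := int_valued_const (fun x => Ξ₁ (F x) - d * Ξ₁ x)
      ((h1c.comp hFc).sub (continuous_const.mul h1c)) (key Ξ₁ ξ₁ h1lift hsc1) x
    rw [hk] at this; linarith
  obtain ⟨k₂, hk₂⟩ : ∃ k : ℤ, ∀ x, Ξ₂ (F x) = d * Ξ₂ x + k := by
    obtain ⟨k, hk⟩ := key Ξ₂ ξ₂ h2lift hsc2 0
    refine ⟨k, fun x => ?_⟩
    have := int_valued_const (fun x => Ξ₂ (F x) - d * Ξ₂ x)
      ((h2c.comp hFc).sub (continuous_const.mul h2c)) (key Ξ₂ ξ₂ h2lift hsc2) x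
    rw [hk] at this; linarith
  set c : ℝ := (k₁ : ℝ) - k₂ with hc
  set Δ : ℝ → ℝ := fun x => Ξ₁ x - Ξ₂ x with hΔ
  have hΔc : Continuous Δ := h1c.sub h2c
  have hΔper : Function.Periodic Δ 1 := by
    intro x; simp only [hΔ, h1deg, h2deg]; ring
  -- Δ is bounded
  obtain ⟨M, hM⟩ : ∃ M : ℝ, ∀ x, |Δ x| ≤ M := by
    obtain ⟨M, hM⟩ := (isCompact_Icc (a := (0:ℝ)) (b := 1)).exists_bound_of_continuousOn
      (hΔc.continuousOn)
    refine ⟨M, fun x => ?_⟩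
    have hfr : Δ x = Δ (Int.fract x) := by
      have h2 := (hΔper.sub_int_mul_eq (x := x) ⌊x⌋)
      rw [mul_one, Int.self_sub_floor] at h2
      exact h2.symm
    rw [hfr]
    exact hM _ ⟨Int.fract_nonneg x, (Int.fract_lt_one x).le⟩
  set Δ' : ℝ → ℝ := fun x => Δ x + c / ((d:ℝ) - 1) with hΔ'
  have hΔ'F : ∀ x, Δ' (F x) = d * Δ' x := by
    intro x
    simp only [hΔ', hΔ, hk₁, hk₂]
    field_simp
    ring
  have hiter : ∀ (n : ℕ) (x), Δ' (F^[n] x) = (d:ℝ) ^ n * Δ' x := by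
    intro n
    induction n with
    | zero => simp
    | succ n ih =>
      intro x
      rw [Function.iterate_succ_apply', hΔ'F, ih]
      ring
  have hbd : ∀ x, |Δ' x| ≤ M + |c / ((d:ℝ) - 1)| := by
    intro x
    calc |Δ' x| ≤ |Δ x| + |c / ((d:ℝ) - 1)| := abs_add_le _ _
    _ ≤ M + |c / ((d:ℝ) - 1)| := by linarith [hM x]
  have hzero : ∀ x, Δ' x = 0 := by
    intro x
    by_contra hne
    have hpos : 0 < |Δ' x| := abs_pos.2 hne
    obtain ⟨n, hn⟩ := pow_unbounded_of_one_lt ((M + |c / ((d:ℝ) - 1)|) / |Δ' x|) hd1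
    have h1 := hbd (F^[n] x)
    rw [hiter n x, abs_mul, abs_pow, abs_of_nonneg (by positivity : (0:ℝ) ≤ (d:ℝ))] at h1
    have := (div_lt_iff₀ hpos).1 hn
    linarith
  have hconst : ∀ x, Ξ₁ x = Ξ₂ x + ((k₂ : ℝ) - k₁) / ((d:ℝ) - 1) := by
    intro x
    have := hzero x
    simp only [hΔ', hΔ, hc] at this
    field_simp at this ⊢
    linarith
  constructor
  · intro h1 h2
    obtain ⟨x, hx⟩ := QuotientAddGroup.mk_surjective x₀
    obtain ⟨n₁, hn₁⟩ := coe_int_exists (by rw [← h1lift, hx, h1] : (Ξ₁ x : AddCircle (1:ℝ)) = 0)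
    obtain ⟨n₂, hn₂⟩ := coe_int_exists (by rw [← h2lift, hx, h2] : (Ξ₂ x : AddCircle (1:ℝ)) = 0)
    have hcv : ((k₂ : ℝ) - k₁) / ((d:ℝ) - 1) = (n₁ : ℝ) - n₂ := by
      have := hconst x
      rw [hn₁, hn₂] at this
      linarith
    funext θ
    obtain ⟨y, rfl⟩ := QuotientAddGroup.mk_surjective θ
    rw [h1lift, h2lift, hconst y, hcv]
    have : ((Ξ₂ y + ((n₁:ℝ) - n₂) : ℝ) : AddCircle (1:ℝ))
        = ((Ξ₂ y : ℝ) : AddCircle (1:ℝ)) + (((n₁ - n₂ : ℤ) : ℝ) : AddCircle (1:ℝ)) := by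
      push_cast [AddCircle.coe_add]
      norm_cast
    rw [this, coe_int_zero, add_zero]
  · refine ⟨k₂ - k₁, fun θ => ?_⟩
    obtain ⟨y, rfl⟩ := QuotientAddGroup.mk_surjective θ
    rw [h1lift, h2lift, hconst y]
    rw [AddCircle.coe_add]
    push_cast
    ring_nf
end

section
/- Let P : ℂ → ℂ be a monic polynomial of degree D ≥ 2 and let G(z) = lim_{n→∞} D^{-n} log⁺|P^{∘n}(z)| be its Green's function. Then G is continuous on ℂ, satisfies G(P(z)) = D·G(z) for all z ∈ ℂ, and G(z) = 0 if and only if z belongs to the filled Julia set K_P = {z : the orbit (P^{∘n}(z))_{n≥0} is bounded}. -/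
/-!
Writing `h = log⁺ ‖·‖`, a monic polynomial of degree `D` satisfies `|h ∘ P - D h| ≤ C`, because
`P(w) ≈ w^D` for large `w`. Hence consecutive terms of `D⁻ⁿ h(Pⁿ z)` differ by at most `C D⁻ⁿ⁻¹`
uniformly in `z`, so the convergence is geometric and uniform, and the limit `G` is continuous with
`|G - h| ≤ C / (D - 1)`. Applied along the orbit, where `G(Pᵐ z) = Dᵐ G(z)`, this bound shows that
`G(z) = 0` exactly when `h` stays bounded on the orbit of `z`.
-/

open Filter Topology Real

namespace Polynomial

variable {𝕜 : Type*} [NormedField 𝕜]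

theorem norm_eval_le_sum_norm_coeff_mul {P : 𝕜[X]} {n : ℕ} (hn : P.natDegree ≤ n) (w : 𝕜) :
    ‖P.eval w‖ ≤ (∑ i ∈ Finset.range (n + 1), ‖P.coeff i‖) * max 1 ‖w‖ ^ n := by
  rw [eval_eq_sum_range' (Nat.lt_succ_of_le hn), Finset.sum_mul]
  refine (norm_sum_le _ _).trans (Finset.sum_le_sum fun i hi => ?_)
  rw [norm_mul, norm_pow]
  gcongr
  calc ‖w‖ ^ i ≤ max 1 ‖w‖ ^ i := by gcongr; exact le_max_right _ _
    _ ≤ max 1 ‖w‖ ^ n :=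
      pow_le_pow_right₀ (le_max_left _ _) (Nat.lt_succ_iff.mp (Finset.mem_range.mp hi))

theorem exists_posLog_norm_eval_le (P : 𝕜[X]) :
    ∃ C, ∀ w : 𝕜, log⁺ ‖P.eval w‖ ≤ P.natDegree * log⁺ ‖w‖ + C := by
  set B := ∑ i ∈ Finset.range (P.natDegree + 1), ‖P.coeff i‖
  refine ⟨log⁺ B, fun w => ?_⟩
  have hmax : log⁺ (max 1 ‖w‖) = log⁺ ‖w‖ := by
    rw [posLog_eq_log_max_one (norm_nonneg w),
      posLog_eq_log (by rw [abs_of_nonneg (by positivity)]; exact le_max_left _ _)]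
  calc log⁺ ‖P.eval w‖ ≤ log⁺ (B * max 1 ‖w‖ ^ P.natDegree) :=
        posLog_le_posLog (norm_nonneg _) (norm_eval_le_sum_norm_coeff_mul le_rfl w)
    _ ≤ log⁺ B + log⁺ (max 1 ‖w‖ ^ P.natDegree) := posLog_mul
    _ = P.natDegree * log⁺ ‖w‖ + log⁺ B := by rw [posLog_pow, hmax]; ring

theorem Monic.exists_norm_pow_le_two_mul_norm_eval {P : 𝕜[X]} (hP : P.Monic)
    (hdeg : 0 < P.natDegree) :
    ∃ R, ∀ w : 𝕜, R ≤ ‖w‖ → ‖w‖ ^ P.natDegree ≤ 2 * ‖P.eval w‖ := by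
  set D := P.natDegree
  set B := ∑ i ∈ Finset.range (D - 1 + 1), ‖P.eraseLead.coeff i‖
  refine ⟨max 1 (2 * B), fun w hw => ?_⟩
  have hw1 : 1 ≤ ‖w‖ := (le_max_left _ _).trans hw
  have hB : 2 * B ≤ ‖w‖ := (le_max_right _ _).trans hw
  have heval : P.eval w = P.eraseLead.eval w + w ^ D := by
    conv_lhs => rw [← P.eraseLead_add_C_mul_X_pow]
    simp [hP.leadingCoeff, D]
  have htail : 2 * ‖P.eraseLead.eval w‖ ≤ ‖w‖ ^ D := by
    calc 2 * ‖P.eraseLead.eval w‖ ≤ 2 * (B * max 1 ‖w‖ ^ (D - 1)) :=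
          mul_le_mul_of_nonneg_left (norm_eval_le_sum_norm_coeff_mul
            (eraseLead_natDegree_le P) w) zero_le_two
      _ = 2 * B * ‖w‖ ^ (D - 1) := by rw [max_eq_right hw1]; ring
      _ ≤ ‖w‖ * ‖w‖ ^ (D - 1) := by gcongr
      _ = ‖w‖ ^ D := by rw [← pow_succ', Nat.sub_add_cancel hdeg]
  have hsub : ‖w‖ ^ D ≤ ‖P.eval w‖ + ‖P.eraseLead.eval w‖ := by
    rw [← norm_pow, show w ^ D = P.eval w - P.eraseLead.eval w by rw [heval]; ring]
    exact norm_sub_le _ _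
  linarith

theorem Monic.exists_le_posLog_norm_eval {P : 𝕜[X]} (hP : P.Monic) :
    ∃ C, ∀ w : 𝕜, P.natDegree * log⁺ ‖w‖ ≤ log⁺ ‖P.eval w‖ + C := by
  rcases Nat.eq_zero_or_pos P.natDegree with hdeg | hdeg
  · exact ⟨0, fun w => by simp [hdeg, posLog_nonneg]⟩
  obtain ⟨R, hR⟩ := hP.exists_norm_pow_le_two_mul_norm_eval hdeg
  refine ⟨log⁺ 2 + P.natDegree * log⁺ R, fun w => ?_⟩
  have : 0 ≤ P.natDegree * log⁺ R := mul_nonneg (Nat.cast_nonneg _) posLog_nonneg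
  rcases le_or_gt R ‖w‖ with hw | hw
  · calc P.natDegree * log⁺ ‖w‖ = log⁺ (‖w‖ ^ P.natDegree) := (posLog_pow _ _).symm
      _ ≤ log⁺ (2 * ‖P.eval w‖) := posLog_le_posLog (pow_nonneg (norm_nonneg w) _) (hR w hw)
      _ ≤ log⁺ 2 + log⁺ ‖P.eval w‖ := posLog_mul
      _ ≤ _ := by linarith
  · have : P.natDegree * log⁺ ‖w‖ ≤ P.natDegree * log⁺ R := by
      gcongr
    linarith [posLog_nonneg (x := 2), posLog_nonneg (x := ‖P.eval w‖)]

theorem Monic.exists_abs_posLog_norm_eval_sub_le {P : 𝕜[X]} (hP : P.Monic) :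
    ∃ C, ∀ w : 𝕜, |log⁺ ‖P.eval w‖ - P.natDegree * log⁺ ‖w‖| ≤ C := by
  obtain ⟨C₁, h₁⟩ := P.exists_posLog_norm_eval_le
  obtain ⟨C₂, h₂⟩ := hP.exists_le_posLog_norm_eval
  refine ⟨max C₁ C₂, fun w => abs_sub_le_iff.2 ⟨?_, ?_⟩⟩
  · linarith [h₁ w, le_max_left C₁ C₂]
  · linarith [h₂ w, le_max_right C₁ C₂]

end Polynomial

theorem bddAbove_range_posLog_norm_iff {ι E : Type*} [SeminormedAddCommGroup E] (u : ι → E) :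
    BddAbove (Set.range fun n => log⁺ ‖u n‖) ↔ Bornology.IsBounded (Set.range u) := by
  simp only [isBounded_iff_forall_norm_le, bddAbove_def, Set.forall_mem_range]
  constructor
  · rintro ⟨M, hM⟩
    refine ⟨exp M, fun n => ?_⟩
    calc ‖u n‖ ≤ exp (log ‖u n‖) := le_exp_log _
      _ ≤ exp M := exp_le_exp.2 ((le_max_right _ _).trans (hM n))
  · rintro ⟨M, hM⟩
    exact ⟨log⁺ M, fun n => posLog_le_posLog (norm_nonneg _) (hM n)⟩

section GreenFunction

variable {X : Type*} (f : X → X) (h : X → ℝ) (d : ℝ)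

noncomputable def greenApprox (n : ℕ) (x : X) : ℝ := (d ^ n)⁻¹ * h (f^[n] x)

variable {f h d}

theorem greenApprox_apply (hd : d ≠ 0) (n : ℕ) (x : X) :
    greenApprox f h d n (f x) = d * greenApprox f h d (n + 1) x := by
  simp only [greenApprox, Function.iterate_succ_apply, pow_succ]
  field_simp

theorem dist_greenApprox_succ_le {C : ℝ} (hd : 0 < d) (hh : ∀ x, |h (f x) - d * h x| ≤ C)
    (n : ℕ) (x : X) :
    dist (greenApprox f h d n x) (greenApprox f h d (n + 1) x) ≤ C / d * d⁻¹ ^ n := by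
  have hsucc : greenApprox f h d (n + 1) x - greenApprox f h d n x
      = (d ^ (n + 1))⁻¹ * (h (f (f^[n] x)) - d * h (f^[n] x)) := by
    simp only [greenApprox, Function.iterate_succ_apply']
    field_simp
    ring
  rw [dist_comm, Real.dist_eq, hsucc, abs_mul, abs_of_pos (by positivity)]
  calc (d ^ (n + 1))⁻¹ * |h (f (f^[n] x)) - d * h (f^[n] x)| ≤ (d ^ (n + 1))⁻¹ * C := by
        gcongr
        exact hh _
    _ = C / d * d⁻¹ ^ n := by rw [inv_pow, pow_succ]; field_simp

variable {G : X → ℝ} (hG : ∀ x, Tendsto (greenApprox f h d · x) atTop (𝓝 (G x)))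
include hG

theorem apply_eq_mul_of_tendsto_greenApprox (hd : d ≠ 0) (x : X) : G (f x) = d * G x := by
  have hshift : Tendsto (fun n => d * greenApprox f h d (n + 1) x) atTop (𝓝 (d * G x)) :=
    ((hG x).comp (tendsto_add_atTop_nat 1)).const_mul d
  simp only [← greenApprox_apply hd] at hshift
  exact tendsto_nhds_unique (hG (f x)) hshift

theorem iterate_apply_eq_pow_mul_of_tendsto_greenApprox (hd : d ≠ 0) (m : ℕ) (x : X) :
    G (f^[m] x) = d ^ m * G x := by
  have : Function.Semiconj G f (d * ·) := apply_eq_mul_of_tendsto_greenApprox hG hd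
  rw [(this.iterate_right m).eq, mul_left_iterate_apply]

theorem abs_sub_greenApprox_le {C : ℝ} (hd : 1 < d) (hh : ∀ x, |h (f x) - d * h x| ≤ C)
    (n : ℕ) (x : X) : |G x - greenApprox f h d n x| ≤ C / (d - 1) * d⁻¹ ^ n := by
  have hd0 : 0 < d := one_pos.trans hd
  have := dist_le_of_le_geometric_of_tendsto (d⁻¹) (C / d)
    (inv_lt_one_of_one_lt₀ hd) (dist_greenApprox_succ_le hd0 hh · x) (hG x) n
  rw [dist_comm, Real.dist_eq] at this
  convert this using 1
  field_simp [(sub_pos.2 hd).ne']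

theorem tendstoUniformly_greenApprox {C : ℝ} (hd : 1 < d) (hh : ∀ x, |h (f x) - d * h x| ≤ C) :
    TendstoUniformly (greenApprox f h d) G atTop := by
  have hrate : Tendsto (fun n : ℕ => C / (d - 1) * d⁻¹ ^ n) atTop (𝓝 0) := by
    simpa using (tendsto_pow_atTop_nhds_zero_of_lt_one (by positivity)
      (inv_lt_one_of_one_lt₀ hd)).const_mul (C / (d - 1))
  rw [Metric.tendstoUniformly_iff]
  intro ε hε
  filter_upwards [hrate.eventually (gt_mem_nhds hε)] with n hn x
  rw [Real.dist_eq]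
  exact (abs_sub_greenApprox_le hG hd hh n x).trans_lt hn

theorem continuous_of_tendsto_greenApprox [TopologicalSpace X] {C : ℝ} (hd : 1 < d)
    (hh : ∀ x, |h (f x) - d * h x| ≤ C) (hf : Continuous f) (hcont : Continuous h) :
    Continuous G :=
  (tendstoUniformly_greenApprox hG hd hh).continuous
    (Frequently.of_forall fun n => continuous_const.mul (hcont.comp (hf.iterate n)))

theorem eq_zero_iff_bddAbove_of_tendsto_greenApprox {C : ℝ} (hd : 1 < d)
    (hh : ∀ x, |h (f x) - d * h x| ≤ C) (h0 : ∀ x, 0 ≤ h x) (x : X) :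
    G x = 0 ↔ BddAbove (Set.range fun n => h (f^[n] x)) := by
  have hd0 : 0 < d := one_pos.trans hd
  constructor
  · intro hx
    refine ⟨C / (d - 1), Set.forall_mem_range.2 fun m => ?_⟩
    have := abs_sub_greenApprox_le hG hd hh 0 (f^[m] x)
    rw [iterate_apply_eq_pow_mul_of_tendsto_greenApprox hG hd0.ne', hx, mul_zero] at this
    simpa [greenApprox] using (neg_le_abs _).trans this
  · rintro ⟨M, hM⟩
    have hdecay : Tendsto (fun n : ℕ => (d ^ n)⁻¹ * M) atTop (𝓝 0) := by
      simpa using (tendsto_inv_atTop_zero.comp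
        (tendsto_pow_atTop_atTop_of_one_lt hd)).mul_const M
    refine tendsto_nhds_unique (hG x) (squeeze_zero (fun n => ?_) (fun n => ?_) hdecay)
    · exact mul_nonneg (by positivity) (h0 _)
    · exact mul_le_mul_of_nonneg_left (hM ⟨n, rfl⟩) (by positivity)

end GreenFunction

/-- The Green's function `G(z) = lim D^{-n} log⁺|P^n(z)|` of a monic
polynomial `P` of degree `D ≥ 2` is continuous, satisfies `G(P(z)) = D·G(z)`,
and vanishes exactly on the filled Julia set. -/
theorem stmt5 (D : ℕ) (hD : 2 ≤ D) (P : Polynomial ℂ) (hmonic : P.Monic)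
    (hdeg : P.natDegree = D) (G : ℂ → ℝ)
    (hG : ∀ z, Filter.Tendsto
      (fun n => ((D : ℝ) ^ n)⁻¹ * max (Real.log (‖(fun w => P.eval w)^[n] z‖)) 0)
      Filter.atTop (nhds (G z))) :
    Continuous G ∧ (∀ z, G (P.eval z) = D * G z) ∧
    ∀ z, (G z = 0 ↔ Bornology.IsBounded (Set.range fun n => (fun w => P.eval w)^[n] z)) := by
  have hd : (1 : ℝ) < D := by exact_mod_cast hD
  obtain ⟨C, hC⟩ := hmonic.exists_abs_posLog_norm_eval_sub_le
  rw [hdeg] at hC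
  have hG' : ∀ z, Tendsto (greenApprox (P.eval ·) (log⁺ ‖·‖) D · z) atTop (𝓝 (G z)) := by
    simpa only [greenApprox, posLog, max_comm] using hG
  refine ⟨continuous_of_tendsto_greenApprox hG' hd hC P.continuous (by fun_prop),
    apply_eq_mul_of_tendsto_greenApprox hG' (by positivity), fun z => ?_⟩
  rw [eq_zero_iff_bddAbove_of_tendsto_greenApprox hG' hd hC (fun _ => posLog_nonneg),
    bddAbove_range_posLog_norm_iff]
end

section
/- Let θ ∈ ℝ/ℤ be periodic of period q under m_D (θ with D^q θ ≡ θ mod 1), D ≥ 2, and suppose the broken external ray R_θ^± of a monic degree D polynomial P crashes into a critical point of the Green's function G at potential s_θ > 0. Then R_θ^± contains infinitely many critical points of G: for every n ≥ 0 the point R_θ^±(s_θ/D^{nq}) is a critical point of G. Consequently, a periodic external ray is either smooth or infinitely broken, and two distinct periodic rays are disjoint. -/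
/-- A broken periodic external ray `B` (period `q` under `P`,
crashing at potential `s₀ > 0` into a critical point of the Green's function,
i.e. an escaping precritical point of `P`) contains infinitely many critical
points of `G`: each `B(s₀/D^{nq})` is precritical. Consequently a periodic ray
is smooth or infinitely broken, and two periodic rays which are eventually
distinct are entirely disjoint. -/
theorem stmt8 (D q : ℕ) (hD : 2 ≤ D) (hq : 1 ≤ q)
    (P : Polynomial ℂ) (hmonic : P.Monic) (hdeg : P.natDegree = D)
    (G : ℂ → ℝ)
    (B : ℝ → ℂ) (hGB : ∀ s : ℝ, 0 < s → G (B s) = s)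
    (hper : ∀ s : ℝ, 0 < s → (fun w => P.eval w)^[q] (B s) = B ((D : ℝ) ^ q * s))
    (s₀ : ℝ) (hs₀ : 0 < s₀)
    (hcrit : ∃ n : ℕ, P.derivative.eval ((fun w => P.eval w)^[n] (B s₀)) = 0) :
    (∀ n : ℕ, ∃ m : ℕ,
      P.derivative.eval ((fun w => P.eval w)^[m] (B (s₀ / (D : ℝ) ^ (n * q)))) = 0) ∧
    ∀ (B' : ℝ → ℂ) (q' : ℕ), 1 ≤ q' →
      (∀ s : ℝ, 0 < s → G (B' s) = s) →
      (∀ s : ℝ, 0 < s → (fun w => P.eval w)^[q'] (B' s) = B' ((D : ℝ) ^ q' * s)) →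
      (∃ S : ℝ, ∀ s : ℝ, S < s → B s ≠ B' s) →
      ∀ s t : ℝ, 0 < s → 0 < t → B s ≠ B' t := by
  have hD0 : (0:ℝ) < (D:ℝ) := by exact_mod_cast (by omega : 0 < D)
  have hD1 : (1:ℝ) < (D:ℝ) := by exact_mod_cast (by omega : 1 < D)
  have hiter : ∀ (C : ℝ → ℂ) (r : ℕ),
      (∀ s : ℝ, 0 < s → (fun w => P.eval w)^[r] (C s) = C ((D : ℝ) ^ r * s)) →
      ∀ (k : ℕ) (s : ℝ), 0 < s →
        (fun w => P.eval w)^[k * r] (C s) = C ((D : ℝ) ^ (k * r) * s) := by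
    intro C r hC k
    induction k with
    | zero => intro s hs; simp
    | succ k ih =>
      intro s hs
      have hDq : (0:ℝ) < (D:ℝ) ^ r * s := mul_pos (pow_pos hD0 r) hs
      have he : (k + 1) * r = k * r + r := by ring
      rw [he, Function.iterate_add_apply, hC s hs, ih _ hDq]
      congr 1
      rw [pow_add]; ring
  constructor
  · intro n
    obtain ⟨m, hm⟩ := hcrit
    refine ⟨m + n * q, ?_⟩
    have hs' : 0 < s₀ / (D : ℝ) ^ (n * q) := div_pos hs₀ (pow_pos hD0 _)
    have h1 := hiter B q hper n _ hs'
    rw [mul_div_cancel₀ _ (ne_of_gt (pow_pos hD0 (n * q)))] at h1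
    rw [Function.iterate_add_apply, h1]
    exact hm
  · rintro B' q' hq' hGB' hper' ⟨S, hS⟩ s t hs ht heq
    have hst : s = t := by rw [← hGB s hs, ← hGB' t ht, heq]
    subst hst
    obtain ⟨n, hn⟩ := pow_unbounded_of_one_lt (S / s) hD1
    have hle : (D:ℝ) ^ n ≤ (D:ℝ) ^ (n * (q * q')) :=
      pow_le_pow_right₀ (le_of_lt hD1) (Nat.le_mul_of_pos_right n (by positivity))
    have hgt : S < (D:ℝ) ^ (n * (q * q')) * s := by
      have : S < (D:ℝ) ^ n * s := (div_lt_iff₀ hs).mp hn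
      calc S < (D:ℝ) ^ n * s := this
        _ ≤ (D:ℝ) ^ (n * (q * q')) * s := mul_le_mul_of_nonneg_right hle (le_of_lt hs)
    have h1 := hiter B q hper (n * q') s hs
    have h2 := hiter B' q' hper' (n * q) s hs
    have e1 : n * q' * q = n * (q * q') := by ring
    have e2 : n * q * q' = n * (q * q') := by ring
    rw [e1] at h1; rw [e2] at h2
    exact hS _ hgt (by rw [← h1, ← h2, heq])
end

section
/- Let I ⊂ ℝ/ℤ be a compact, totally disconnected set and Π : I → ℝ/ℤ a continuous monotone degree 1 surjection all of whose fibers are finite. Extend Π monotonically to ℝ/ℤ and set C = ℝ/ℤ ∖ ⋃_{x} int(Π^{-1}(x)). Then C is a Cantor set (nonempty, compact, perfect, totally disconnected) contained in I, and C equals the set of condensation points of I (points every neighborhood of which contains uncountably many points of I). -/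
open Set Topology

/-- A countable preconnected subset of a metric space is a subsingleton. -/
lemma aux_countable_preconnected_subsingleton {X : Type*} [MetricSpace X] {s : Set X}
    (hc : s.Countable) (hp : IsPreconnected s) : s.Subsingleton := by
  intro a ha b hb
  by_contra hab
  have hd : 0 < dist a b := dist_pos.mpr hab
  have himg : IsPreconnected ((fun y => dist a y) '' s) :=
    hp.image _ (continuous_const.dist continuous_id).continuousOn
  have hsub : Icc (0:ℝ) (dist a b) ⊆ (fun y => dist a y) '' s :=
    himg.Icc_subset ⟨a, ha, by simp⟩ ⟨b, hb, rfl⟩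
  have hcc : (Icc (0:ℝ) (dist a b)).Countable := (hc.image _).mono hsub
  have h1 := Cardinal.mk_Icc_real hd
  have h2 := hcc.le_aleph0
  rw [h1] at h2
  exact absurd h2 Cardinal.aleph0_lt_continuum.not_ge

/-- In the circle, every point of an open set has an open connected neighborhood inside it. -/
lemma aux_conn_nbhd {U : Set (AddCircle (1:ℝ))} (hU : IsOpen U) {θ : AddCircle (1:ℝ)}
    (hθ : θ ∈ U) :
    ∃ W : Set (AddCircle (1:ℝ)), IsOpen W ∧ IsPreconnected W ∧ θ ∈ W ∧ W ⊆ U := by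
  obtain ⟨t, rfl⟩ := QuotientAddGroup.mk_surjective θ
  have hcont : Continuous ((↑) : ℝ → AddCircle (1:ℝ)) := continuous_quotient_mk'
  have hpre : IsOpen (((↑) : ℝ → AddCircle (1:ℝ)) ⁻¹' U) := hU.preimage hcont
  obtain ⟨ε, hε, hball⟩ := Metric.isOpen_iff.mp hpre t hθ
  refine ⟨((↑) : ℝ → AddCircle (1:ℝ)) '' Metric.ball t ε,
    QuotientAddGroup.isOpenMap_coe _ Metric.isOpen_ball,
    ((convex_ball t ε).isPreconnected).image _ hcont.continuousOn,
    ⟨t, Metric.mem_ball_self hε, rfl⟩, ?_⟩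
  rintro _ ⟨s, hs, rfl⟩
  exact hball hs

/-- The set of non-condensation points (within I) is countable. -/
lemma aux_noncond_countable {X : Type*} [TopologicalSpace X] [SecondCountableTopology X]
    (I : Set X) : {θ ∈ I | ∃ U ∈ 𝓝 θ, (U ∩ I).Countable}.Countable := by
  obtain ⟨b, hbc, -, hb⟩ := TopologicalSpace.exists_countable_basis X
  have hsub : {θ ∈ I | ∃ U ∈ 𝓝 θ, (U ∩ I).Countable} ⊆
      ⋃ V ∈ {V ∈ b | (V ∩ I).Countable}, V ∩ I := by
    rintro θ ⟨hθI, U, hU, hUc⟩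
    obtain ⟨u, huU, hu_open, hθu⟩ := mem_nhds_iff.mp hU
    obtain ⟨V, hVb, hθV, hVu⟩ := hb.exists_subset_of_mem_open hθu hu_open
    have hVc : (V ∩ I).Countable := hUc.mono (inter_subset_inter_left I (hVu.trans huU))
    exact mem_biUnion ⟨hVb, hVc⟩ ⟨hθV, hθI⟩
  exact Countable.mono hsub (Countable.biUnion (hbc.mono (sep_subset _ _)) fun V hV => hV.2)

/-- For a compact totally disconnected `I ⊂ ℝ/ℤ` with a continuous
monotone degree 1 surjection `Pr : I → ℝ/ℤ` (extended monotonically, constant on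
gaps of `I`) with finite fibers on `I`, the set `C` obtained by removing the
interiors of the fibers is a Cantor set contained in `I`, and equals the set of
condensation points of `I`. -/
theorem stmt10 (I : Set (AddCircle (1:ℝ))) (hIc : IsCompact I)
    (hItd : IsTotallyDisconnected I) (hIne : I.Nonempty)
    (Pr : AddCircle (1:ℝ) → AddCircle (1:ℝ)) (hPc : Continuous Pr)
    (Φ : ℝ → ℝ) (hΦm : Monotone Φ) (hΦdeg : ∀ x, Φ (x + 1) = Φ x + 1)
    (hΦlift : ∀ x : ℝ, Pr (x : AddCircle (1:ℝ)) = ((Φ x : ℝ) : AddCircle (1:ℝ)))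
    (hsurj : Set.SurjOn Pr I Set.univ)
    (hfib : ∀ x : AddCircle (1:ℝ), (I ∩ Pr ⁻¹' {x}).Finite)
    (hconst : ∀ θ ∉ I, ∀ θ' ∈ connectedComponentIn Iᶜ θ, Pr θ' = Pr θ) :
    (⋃ x : AddCircle (1:ℝ), interior (Pr ⁻¹' {x}))ᶜ ⊆ I ∧
    ((⋃ x : AddCircle (1:ℝ), interior (Pr ⁻¹' {x}))ᶜ).Nonempty ∧
    IsCompact (⋃ x : AddCircle (1:ℝ), interior (Pr ⁻¹' {x}))ᶜ ∧
    Perfect (⋃ x : AddCircle (1:ℝ), interior (Pr ⁻¹' {x}))ᶜ ∧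
    IsTotallyDisconnected (⋃ x : AddCircle (1:ℝ), interior (Pr ⁻¹' {x}))ᶜ ∧
    (⋃ x : AddCircle (1:ℝ), interior (Pr ⁻¹' {x}))ᶜ =
      {θ ∈ I | ∀ U ∈ nhds θ, ¬(U ∩ I).Countable} := by
  set A : Set (AddCircle (1:ℝ)) := ⋃ x : AddCircle (1:ℝ), interior (Pr ⁻¹' {x}) with hA
  have hIclosed : IsClosed I := hIc.isClosed
  -- a locally constant point is in A
  have hmemA : ∀ θ : AddCircle (1:ℝ), ∀ W : Set (AddCircle (1:ℝ)), IsOpen W → θ ∈ W →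
      (∀ θ' ∈ W, Pr θ' = Pr θ) → θ ∈ A := by
    intro θ W hWo hθW hWc
    have : W ⊆ Pr ⁻¹' {Pr θ} := fun θ' hθ' => by simp [hWc θ' hθ']
    exact mem_iUnion.mpr ⟨Pr θ, interior_maximal this hWo hθW⟩
  -- (1) : outside I, points are in A
  have h1 : ∀ θ, θ ∉ I → θ ∈ A := by
    intro θ hθ
    obtain ⟨W, hWo, hWp, hθW, hWsub⟩ := aux_conn_nbhd hIclosed.isOpen_compl hθ
    refine hmemA θ W hWo hθW fun θ' hθ' => hconst θ hθ (θ')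
      (hWp.subset_connectedComponentIn hθW hWsub hθ')
  -- (2) : non-condensation points of I are in A
  have h2 : ∀ θ ∈ I, ∀ U ∈ 𝓝 θ, (U ∩ I).Countable → θ ∈ A := by
    intro θ hθI U hU hUc
    obtain ⟨u, huU, hu_open, hθu⟩ := mem_nhds_iff.mp hU
    obtain ⟨W, hWo, hWp, hθW, hWsub⟩ := aux_conn_nbhd hu_open hθu
    obtain ⟨D, hDc, hDd⟩ := TopologicalSpace.exists_countable_dense (AddCircle (1:ℝ))
    -- Pr '' W is countable
    have himgc : (Pr '' W).Countable := by
      have hWI : (Pr '' (W ∩ I)).Countable :=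
        (hUc.mono (inter_subset_inter_left I ((hWsub.trans huU)))).image Pr
      have hWD : Pr '' (W \ I) ⊆ Pr '' D := by
        rintro _ ⟨θ', ⟨hθ'W, hθ'I⟩, rfl⟩
        obtain ⟨W', hW'o, hW'p, hθ'W', hW'sub⟩ := aux_conn_nbhd hIclosed.isOpen_compl hθ'I
        obtain ⟨d, hdD, hdW'⟩ := hDd.exists_mem_open hW'o ⟨θ', hθ'W'⟩
        have hd : Pr d = Pr θ' :=
          hconst θ' hθ'I d (hW'p.subset_connectedComponentIn hθ'W' hW'sub hdW')
        exact ⟨d, hdD, hd⟩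
      have : Pr '' W ⊆ Pr '' (W ∩ I) ∪ Pr '' D := by
        rintro _ ⟨θ', hθ', rfl⟩
        by_cases h : θ' ∈ I
        · exact Or.inl ⟨θ', ⟨hθ', h⟩, rfl⟩
        · exact Or.inr (hWD ⟨θ', ⟨hθ', h⟩, rfl⟩)
      exact Countable.mono this (hWI.union (hDc.image Pr))
    have hsub : (Pr '' W).Subsingleton :=
      aux_countable_preconnected_subsingleton himgc (hWp.image Pr hPc.continuousOn)
    exact hmemA θ W hWo hθW fun θ' hθ' => hsub ⟨θ', hθ', rfl⟩ ⟨θ, hθW, rfl⟩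
  -- (3) : points of A in I are non-condensation points
  have h3 : ∀ θ ∈ A, θ ∈ I → ∃ U ∈ 𝓝 θ, (U ∩ I).Countable := by
    intro θ hθA hθI
    obtain ⟨x, hx⟩ := mem_iUnion.mp hθA
    refine ⟨interior (Pr ⁻¹' {x}), isOpen_interior.mem_nhds hx, ?_⟩
    refine Countable.mono ?_ ((hfib x).countable)
    intro y hy
    exact ⟨hy.2, interior_subset hy.1⟩
  have hAopen : IsOpen A := isOpen_iUnion fun x => isOpen_interior
  have hAclosed : IsClosed Aᶜ := hAopen.isClosed_compl
  -- the key equality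
  have hEq : Aᶜ = {θ ∈ I | ∀ U ∈ nhds θ, ¬(U ∩ I).Countable} := by
    ext θ
    constructor
    · intro hθ
      have hθI : θ ∈ I := by
        by_contra h
        exact hθ (h1 θ h)
      refine ⟨hθI, fun U hU hc => hθ (h2 θ hθI U hU hc)⟩
    · rintro ⟨hθI, hcond⟩ hθA
      obtain ⟨U, hU, hUc⟩ := h3 θ hθA hθI
      exact hcond U hU hUc
  -- I is uncountable
  have hIunc : ¬ I.Countable := by
    intro hc
    have huc : (univ : Set (AddCircle (1:ℝ))).Countable :=
      Countable.mono hsurj (hc.image Pr)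
    have hconn : IsPreconnected (univ : Set (AddCircle (1:ℝ))) := by
      have : (univ : Set (AddCircle (1:ℝ))) = ((↑) : ℝ → AddCircle (1:ℝ)) '' univ := by
        rw [image_univ, (QuotientAddGroup.mk_surjective).range_eq]
      rw [this]
      exact isPreconnected_univ.image _ (continuous_quotient_mk').continuousOn
    have hss := aux_countable_preconnected_subsingleton huc hconn
    have hne : ((1/2 : ℝ) : AddCircle (1:ℝ)) ≠ 0 := by
      rw [Ne, AddCircle.coe_eq_zero_iff]
      rintro ⟨n, hn⟩
      have h1' : (n:ℝ) = 1/2 := by simpa using hn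
      have h2' : ((2*n : ℤ) : ℝ) = 1 := by push_cast; linarith
      have h3' : (2*n : ℤ) = 1 := by exact_mod_cast h2'
      omega
    exact hne (hss (mem_univ _) (mem_univ _))
  have hNc := aux_noncond_countable I
  -- nonempty
  have hne : (Aᶜ).Nonempty := by
    rw [hEq]
    by_contra h
    rw [not_nonempty_iff_eq_empty] at h
    apply hIunc
    refine Countable.mono ?_ hNc
    intro θ hθ
    refine ⟨hθ, ?_⟩
    by_contra hcon
    push_neg at hcon
    have : θ ∈ {θ ∈ I | ∀ U ∈ nhds θ, ¬(U ∩ I).Countable} := ⟨hθ, fun U hU => hcon U hU⟩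
    rw [h] at this
    exact this
  refine ⟨?_, hne, hAclosed.isCompact, ?_, ?_, hEq⟩
  · intro θ hθ
    rw [hEq] at hθ
    exact hθ.1
  · refine ⟨hAclosed, ?_⟩
    intro θ hθ
    rw [accPt_iff_nhds]
    intro U hU
    rw [hEq] at hθ
    obtain ⟨hθI, hcond⟩ := hθ
    have hUc : ¬ (U ∩ I).Countable := hcond U hU
    have hkey : ¬ ((U ∩ I) \ ({θ' ∈ I | ∃ V ∈ 𝓝 θ', (V ∩ I).Countable} ∪ {θ})).Countable := by
      intro h
      apply hUc
      have hsplit : U ∩ I ⊆ ((U ∩ I) \ ({θ' ∈ I | ∃ V ∈ 𝓝 θ', (V ∩ I).Countable} ∪ {θ})) ∪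
          ({θ' ∈ I | ∃ V ∈ 𝓝 θ', (V ∩ I).Countable} ∪ {θ}) := fun y hy => by
        by_cases hc : y ∈ ({θ' ∈ I | ∃ V ∈ 𝓝 θ', (V ∩ I).Countable} ∪ {θ})
        · exact Or.inr hc
        · exact Or.inl ⟨hy, hc⟩
      exact Countable.mono hsplit (h.union (hNc.union (countable_singleton θ)))
    have hne' : ((U ∩ I) \ ({θ' ∈ I | ∃ V ∈ 𝓝 θ', (V ∩ I).Countable} ∪ {θ})).Nonempty := by
      rw [Set.nonempty_iff_ne_empty]
      intro hemp
      rw [hemp] at hkey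
      exact hkey countable_empty
    obtain ⟨y, ⟨hyU, hyI⟩, hyn⟩ := hne'
    rw [mem_union] at hyn
    push_neg at hyn
    refine ⟨y, ⟨hyU, ?_⟩, fun h => hyn.2 (by simp [h])⟩
    rw [hEq]
    refine ⟨hyI, fun V hV hVc => hyn.1 ⟨hyI, V, hV, hVc⟩⟩
  · intro t htA hpc
    exact hItd t (fun y hy => by
      have := htA hy
      rw [hEq] at this
      exact this.1) hpc
end

section
/- Let K ⊂ ℂ be the closed unit disk together with the semicircular arcs {(1+1/n)e^{2πit} : |t| ≤ 1/4} for all integers n ≥ 1. Then K is compact, and every point e^{2πit} with |t| < 1/4 on the unit circle is inaccessible from ℂ ∖ K: there is no continuous path γ : [0,1] → ℂ with γ(s) ∈ ℂ∖K for s < 1 and γ(1) = e^{2πit}. -/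
/-!
The arcs are the right semicircles `‖z‖ = r n, re z ≥ 0` with `r n ↓ 1`, so `K` is the union of the
closed disk with the preimage of the compact set `{1} ∪ {r n}` under `z ↦ ‖z‖`, cut down to the
closed right half-plane. A path landing at `z`, `‖z‖ = 1`, `re z > 0`, stays in the open right
half-plane on some `[u₀, 1]`; since `γ u₀` lies outside the disk, the intermediate value theorem
for `‖γ‖` on `[u₀, 1]` makes the path hit a semicircle of radius `r n ∈ (1, ‖γ u₀‖)` before time 1.
-/

open Set Filter Topology Complex

def rightSemicircle (ρ : ℝ) : Set ℂ := {z | ‖z‖ = ρ ∧ 0 ≤ z.re}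

def IsAccessibleFrom {X : Type*} [TopologicalSpace X] (K : Set X) (z : X) : Prop :=
  ∃ γ : ℝ → X, ContinuousOn γ (Icc 0 1) ∧ (∀ u ∈ Ico (0 : ℝ) 1, γ u ∉ K) ∧ γ 1 = z

lemma exp_two_pi_I_mul (t : ℝ) :
    exp (2 * Real.pi * I * t) = exp ((2 * Real.pi * t : ℝ) * I) := by
  push_cast; ring_nf

lemma norm_exp_two_pi_I_mul (t : ℝ) : ‖exp (2 * Real.pi * I * t)‖ = 1 := by
  rw [exp_two_pi_I_mul, norm_exp_ofReal_mul_I]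

lemma re_exp_two_pi_I_mul (t : ℝ) :
    (exp (2 * Real.pi * I * t)).re = Real.cos (2 * Real.pi * t) := by
  rw [exp_two_pi_I_mul, exp_ofReal_mul_I_re]

lemma setOf_exists_mul_exp_eq {ρ : ℝ} (hρ : 0 ≤ ρ) :
    {z : ℂ | ∃ t : ℝ, |t| ≤ 1 / 4 ∧ z = ρ * exp (2 * Real.pi * I * t)} = rightSemicircle ρ := by
  ext z
  constructor
  · rintro ⟨t, ht, rfl⟩
    refine ⟨by rw [norm_mul, norm_exp_two_pi_I_mul, norm_real, Real.norm_of_nonneg hρ, mul_one], ?_⟩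
    rw [re_ofReal_mul, re_exp_two_pi_I_mul]
    refine mul_nonneg hρ (Real.cos_nonneg_of_mem_Icc ⟨?_, ?_⟩) <;>
      nlinarith [abs_le.mp ht, Real.pi_pos]
  · rintro ⟨hz, hre⟩
    refine ⟨z.arg / (2 * Real.pi), ?_, ?_⟩
    · have := abs_arg_le_pi_div_two_iff.mpr hre
      rw [abs_div, abs_of_pos Real.two_pi_pos, div_le_iff₀ Real.two_pi_pos]
      linarith
    · rw [exp_two_pi_I_mul, mul_div_cancel₀ _ Real.two_pi_pos.ne', ← hz, norm_mul_exp_arg_mul_I]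

lemma isCompact_setOf_norm_mem_and_re_nonneg {C : Set ℝ} (hC : IsCompact C) :
    IsCompact {z : ℂ | ‖z‖ ∈ C ∧ 0 ≤ z.re} := by
  obtain ⟨R, hR⟩ := (Metric.isBounded_iff_subset_closedBall 0).mp hC.isBounded
  refine Metric.isCompact_of_isClosed_isBounded
    ((hC.isClosed.preimage continuous_norm).inter (isClosed_le continuous_const continuous_re))
    ((Metric.isBounded_closedBall (x := (0 : ℂ)) (r := R)).subset fun z hz => ?_)
  simpa using hR hz.1

theorem isCompact_closedBall_union_rightSemicircle {r : ℕ → ℝ} (hr : Tendsto r atTop (𝓝 1)) :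
    IsCompact (Metric.closedBall (0 : ℂ) 1 ∪ ⋃ n, rightSemicircle (r n)) := by
  have hK : Metric.closedBall (0 : ℂ) 1 ∪ ⋃ n, rightSemicircle (r n) =
      Metric.closedBall 0 1 ∪ {z : ℂ | ‖z‖ ∈ insert 1 (range r) ∧ 0 ≤ z.re} := by
    ext z
    simp only [rightSemicircle, mem_union, mem_iUnion, mem_ofPred_eq, mem_insert_iff, mem_range,
      mem_closedBall_zero_iff]
    grind
  rw [hK]
  exact (isCompact_closedBall 0 1).union
    (isCompact_setOf_norm_mem_and_re_nonneg hr.isCompact_insert_range)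

lemma exists_Icc_subset_preimage_of_continuousWithinAt {X : Type*} [TopologicalSpace X]
    {γ : ℝ → X} (hγ : ContinuousWithinAt γ (Icc 0 1) 1) {U : Set X} (hU : IsOpen U)
    (h1 : γ 1 ∈ U) : ∃ u₀ ∈ Ico (0 : ℝ) 1, Icc u₀ 1 ⊆ γ ⁻¹' U := by
  have hmem : γ ⁻¹' U ∈ 𝓝[≤] (1 : ℝ) := by
    rw [← nhdsWithin_Icc_eq_nhdsLE zero_lt_one]
    exact hγ (hU.mem_nhds h1)
  obtain ⟨l, hl, hsub⟩ := mem_nhdsLE_iff_exists_Icc_subset.mp hmem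
  exact ⟨max l 0, ⟨le_max_right _ _, max_lt hl zero_lt_one⟩,
    (Icc_subset_Icc_left (le_max_left _ _)).trans hsub⟩

theorem not_isAccessibleFrom_closedBall_union_rightSemicircle {r : ℕ → ℝ}
    (hr : Tendsto r atTop (𝓝 1)) (hr1 : ∀ n, 1 < r n) {z : ℂ} (hz : ‖z‖ = 1) (hre : 0 < z.re) :
    ¬ IsAccessibleFrom (Metric.closedBall (0 : ℂ) 1 ∪ ⋃ n, rightSemicircle (r n)) z := by
  rintro ⟨γ, hγ, hγK, rfl⟩
  obtain ⟨u₀, hu₀, hpos⟩ := exists_Icc_subset_preimage_of_continuousWithinAt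
    (hγ 1 ⟨zero_le_one, le_rfl⟩) (isOpen_lt continuous_const continuous_re) hre
  have hu₀_norm : 1 < ‖γ u₀‖ := by
    by_contra! h
    exact hγK u₀ hu₀ (Or.inl (mem_closedBall_zero_iff.mpr h))
  obtain ⟨n, hn⟩ := (hr.eventually (gt_mem_nhds hu₀_norm)).exists
  obtain ⟨u, hu, hu_norm⟩ := intermediate_value_Icc' hu₀.2.le
    ((hγ.mono (Icc_subset_Icc_left hu₀.1)).norm) (show r n ∈ Icc ‖γ 1‖ ‖γ u₀‖ from
      ⟨hz.le.trans (hr1 n).le, hn.le⟩)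
  have hu1 : u ≠ 1 := by
    rintro rfl
    exact (hr1 n).ne (hz ▸ hu_norm)
  exact hγK u ⟨hu₀.1.trans hu.1, hu.2.lt_of_ne hu1⟩
    (Or.inr (mem_iUnion.mpr ⟨n, hu_norm, (hpos hu).le⟩))

/-- The union `K` of the closed unit disk and the semicircular
arcs `{(1+1/n)e^{2πit} : |t| ≤ 1/4}`, `n ≥ 1`, is compact, and every point
`e^{2πit}` with `|t| < 1/4` of the unit circle is inaccessible from `ℂ ∖ K`. -/
theorem stmt13 :
    IsCompact (Metric.closedBall (0 : ℂ) 1 ∪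
      ⋃ n : ℕ, {z : ℂ | ∃ t : ℝ, |t| ≤ 1 / 4 ∧
        z = (1 + 1 / ((n : ℂ) + 1)) * Complex.exp (2 * Real.pi * Complex.I * t)}) ∧
    ∀ t : ℝ, |t| < 1 / 4 →
      ¬ ∃ γ : ℝ → ℂ, ContinuousOn γ (Set.Icc 0 1) ∧
        (∀ u ∈ Set.Ico (0 : ℝ) 1,
          γ u ∉ Metric.closedBall (0 : ℂ) 1 ∪
            ⋃ n : ℕ, {z : ℂ | ∃ t' : ℝ, |t'| ≤ 1 / 4 ∧
              z = (1 + 1 / ((n : ℂ) + 1)) * Complex.exp (2 * Real.pi * Complex.I * t')}) ∧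
        γ 1 = Complex.exp (2 * Real.pi * Complex.I * t) := by
  set r : ℕ → ℝ := fun n => 1 + 1 / ((n : ℝ) + 1)
  have hr : Tendsto r atTop (𝓝 1) := by
    simpa [r] using tendsto_one_div_add_atTop_nhds_zero_nat.const_add (1 : ℝ)
  have hr1 (n : ℕ) : 1 < r n := lt_add_of_pos_right 1 (by positivity)
  have harc (n : ℕ) : {z : ℂ | ∃ t : ℝ, |t| ≤ 1 / 4 ∧
      z = (1 + 1 / ((n : ℂ) + 1)) * exp (2 * Real.pi * I * t)} = rightSemicircle (r n) := by
    rw [← setOf_exists_mul_exp_eq (zero_le_one.trans (hr1 n).le)]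
    push_cast [r]
    rfl
  simp only [harc]
  refine ⟨isCompact_closedBall_union_rightSemicircle hr, fun t ht => ?_⟩
  refine not_isAccessibleFrom_closedBall_union_rightSemicircle hr hr1 (norm_exp_two_pi_I_mul t) ?_
  rw [re_exp_two_pi_I_mul]
  apply Real.cos_pos_of_mem_Ioo
  constructor <;> nlinarith [abs_lt.mp ht, Real.pi_pos]
end

section
/- Let d ≥ 2 and let F : ℝ → ℝ be continuous nondecreasing with F(x+1) = F(x) + d for all x, and F(x₀) = x₀. Then on the space 𝒮 of continuous functions Ξ : ℝ → ℝ satisfying Ξ(x+1) = Ξ(x) + 1 and Ξ(x₀) = 0, equipped with the sup metric, the operator T(Ξ) = (Ξ ∘ F)/d maps 𝒮 to 𝒮 and is a contraction with factor 1/d; hence there is a unique Ξ ∈ 𝒮 with Ξ ∘ F = d·Ξ. -/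
open BoundedContinuousFunction Function
open scoped NNReal

/-- A continuous function periodic with period 1, as a bounded continuous function. -/
noncomputable def mkBCF (g : ℝ → ℝ) (hc : Continuous g) (hp : Periodic g 1) : ℝ →ᵇ ℝ :=
  ofNormedAddCommGroup g hc
    (isBounded_iff_forall_norm_le.mp (hp.isBounded_of_continuous one_ne_zero hc)).choose
    fun x => (isBounded_iff_forall_norm_le.mp
      (hp.isBounded_of_continuous one_ne_zero hc)).choose_spec _ (Set.mem_range_self x)

@[simp] lemma mkBCF_apply (g : ℝ → ℝ) (hc : Continuous g) (hp : Periodic g 1) (x : ℝ) :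
    mkBCF g hc hp x = g x := rfl

/-- For a continuous nondecreasing `F : ℝ → ℝ` with
`F(x+1) = F(x)+d` and `F(x₀) = x₀`, the operator `T(Ξ) = (Ξ ∘ F)/d` maps the
space `𝒮 = {Ξ continuous : Ξ(x+1) = Ξ(x)+1, Ξ(x₀)=0}` to itself, is a
`1/d`-contraction for the sup metric, and hence there is a unique `Ξ ∈ 𝒮`
with `Ξ ∘ F = d·Ξ`. -/
theorem stmt15 (d : ℕ) (hd : 2 ≤ d) (F : ℝ → ℝ) (hFc : Continuous F)
    (hFm : Monotone F) (hFdeg : ∀ x, F (x + 1) = F x + d)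
    (x₀ : ℝ) (hfix : F x₀ = x₀) :
    (∀ Ξ : ℝ → ℝ, Continuous Ξ → (∀ x, Ξ (x + 1) = Ξ x + 1) → Ξ x₀ = 0 →
      Continuous (fun x => Ξ (F x) / d) ∧
      (∀ x, Ξ (F (x + 1)) / d = Ξ (F x) / d + 1) ∧ Ξ (F x₀) / d = 0) ∧
    (∀ Ξ Ξ' : ℝ → ℝ, Continuous Ξ → (∀ x, Ξ (x + 1) = Ξ x + 1) → Ξ x₀ = 0 →
      Continuous Ξ' → (∀ x, Ξ' (x + 1) = Ξ' x + 1) → Ξ' x₀ = 0 →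
      ∀ x, |Ξ (F x) / d - Ξ' (F x) / d| ≤ (1 / d) * ⨆ y : ℝ, |Ξ y - Ξ' y|) ∧
    (∃! Ξ : ℝ → ℝ, Continuous Ξ ∧ (∀ x, Ξ (x + 1) = Ξ x + 1) ∧ Ξ x₀ = 0 ∧
      ∀ x, Ξ (F x) = d * Ξ x) := by
  have hd0 : (0:ℝ) < d := by positivity
  have hdne : (d:ℝ) ≠ 0 := hd0.ne'
  -- Ξ of degree one: Ξ (y + n) = Ξ y + n
  have deg_nat : ∀ (Ξ : ℝ → ℝ), (∀ x, Ξ (x + 1) = Ξ x + 1) → ∀ (y : ℝ) (n : ℕ),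
      Ξ (y + n) = Ξ y + n := by
    intro Ξ hΞ y n
    induction n with
    | zero => simp
    | succ k ih => push_cast; rw [← add_assoc, hΞ, ih]; push_cast; ring
  refine ⟨?_, ?_, ?_⟩
  · intro Ξ hΞc hΞdeg hΞ0
    refine ⟨(hΞc.comp hFc).div_const _, fun x => ?_, by rw [hfix, hΞ0, zero_div]⟩
    rw [hFdeg, deg_nat Ξ hΞdeg, add_div, div_self hdne]
  · intro Ξ Ξ' hΞc hΞdeg hΞ0 hΞ'c hΞ'deg hΞ'0 x
    have hper : Periodic (fun y => |Ξ y - Ξ' y|) 1 := by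
      intro y; simp only [hΞdeg, hΞ'deg]; ring_nf
    have hbdd : BddAbove (Set.range fun y => |Ξ y - Ξ' y|) :=
      (hper.isBounded_of_continuous one_ne_zero ((hΞc.sub hΞ'c).abs)).bddAbove
    have h1 : |Ξ (F x) - Ξ' (F x)| ≤ ⨆ y : ℝ, |Ξ y - Ξ' y| := le_ciSup hbdd (F x)
    rw [div_sub_div_same, abs_div, abs_of_pos hd0, one_div, inv_mul_eq_div]
    gcongr
  · -- Banach fixed point on the closed subspace of bounded continuous functions
    set S : Set (ℝ →ᵇ ℝ) := {g | (∀ x, g (x + 1) = g x) ∧ g x₀ = -x₀} with hS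
    have hSclosed : IsClosed S := by
      have h1 : IsClosed {g : ℝ →ᵇ ℝ | ∀ x, g (x + 1) = g x} := by
        rw [show {g : ℝ →ᵇ ℝ | ∀ x, g (x + 1) = g x} = ⋂ x : ℝ, {g | g (x + 1) = g x} by
          ext g; simp]
        exact isClosed_iInter fun x => isClosed_eq (continuous_eval_const (x + 1)) (continuous_eval_const x)
      exact h1.inter (isClosed_eq (continuous_eval_const x₀) continuous_const)
    haveI : CompleteSpace S := hSclosed.completeSpace_coe
    haveI hne : Nonempty S :=
      ⟨⟨BoundedContinuousFunction.const ℝ (-x₀), ⟨fun x => rfl, rfl⟩⟩⟩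
    -- the auxiliary bounded function P(x) = F x / d - x
    have hPper : Periodic (fun x => F x / d - x) 1 := by
      intro x
      show F (x + 1) / d - (x + 1) = F x / d - x
      rw [hFdeg]; field_simp; ring
    set P : ℝ →ᵇ ℝ := mkBCF _ ((hFc.div_const _).sub continuous_id') hPper with hP
    set Fc : C(ℝ, ℝ) := ⟨F, hFc⟩ with hFcm
    set Φ : (ℝ →ᵇ ℝ) → (ℝ →ᵇ ℝ) := fun g => (d:ℝ)⁻¹ • g.compContinuous Fc + P with hΦ
    have hΦapply : ∀ g x, Φ g x = g (F x) / d + (F x / d - x) := by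
      intro g x
      simp only [hΦ, hP, BoundedContinuousFunction.coe_add, Pi.add_apply,
        BoundedContinuousFunction.coe_smul, Pi.smul_apply, compContinuous_apply,
        mkBCF_apply, smul_eq_mul, hFcm, ContinuousMap.coe_mk, Pi.sub_apply]
      ring
    have hΦS : ∀ g ∈ S, Φ g ∈ S := by
      rintro g ⟨hgp, hg0⟩
      have hgper : Periodic (⇑g) 1 := hgp
      constructor
      · intro x
        rw [hΦapply, hΦapply, hFdeg,
          show g (F x + (d:ℝ)) = g (F x) by simpa using (hgper.nat_mul d) (F x)]
        field_simp
        ring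
      · rw [hΦapply, hfix, hg0]; field_simp; ring
    set f : S → S := fun g => ⟨Φ g, hΦS g g.2⟩ with hf
    have hcontr : ContractingWith (d:ℝ≥0)⁻¹ f := by
      constructor
      · have h1d : (1:ℝ≥0) < d := by exact_mod_cast lt_of_lt_of_le one_lt_two hd
        exact inv_lt_one_of_one_lt₀ h1d
      · apply LipschitzWith.of_dist_le_mul
        intro g h
        have hle : dist (f g : ℝ →ᵇ ℝ) (f h : ℝ →ᵇ ℝ) ≤ (d:ℝ)⁻¹ * dist (g:ℝ →ᵇ ℝ) h := by
          show dist (Φ g) (Φ h) ≤ _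
          apply (BoundedContinuousFunction.dist_le (by positivity)).2
          intro x
          rw [hΦapply, hΦapply]
          have h2 : dist ((g:ℝ→ᵇℝ) (F x)) ((h:ℝ→ᵇℝ) (F x)) ≤ dist (g:ℝ→ᵇℝ) (h:ℝ→ᵇℝ) :=
            dist_coe_le_dist (F x)
          rw [Real.dist_eq] at h2 ⊢
          have e : (g:ℝ→ᵇℝ) (F x) / d + (F x / d - x) - ((h:ℝ→ᵇℝ) (F x) / d + (F x / d - x))
              = ((g:ℝ→ᵇℝ) (F x) - (h:ℝ→ᵇℝ) (F x)) / d := by ring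
          rw [e, abs_div, abs_of_pos hd0, div_eq_inv_mul]
          gcongr
        simpa [Subtype.dist_eq] using hle
    set g₀ : S := ContractingWith.fixedPoint f hcontr with hg₀
    have hfp : f g₀ = g₀ := hcontr.fixedPoint_isFixedPt
    have hfix₀ : Φ (g₀ : ℝ →ᵇ ℝ) = (g₀ : ℝ →ᵇ ℝ) := congrArg Subtype.val hfp
    -- translate fixed point equation
    have key : ∀ (g : ℝ →ᵇ ℝ), Φ g = g ↔ ∀ x, (g (F x) + F x) = d * (g x + x) := by
      intro g
      constructor
      · intro h x
        have h' := DFunLike.congr_fun h x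
        rw [hΦapply] at h'
        field_simp at h'
        linarith
      · intro h
        ext x
        rw [hΦapply]
        have := h x
        field_simp
        linarith
    refine ⟨fun x => x + (g₀ : ℝ →ᵇ ℝ) x,
      ⟨continuous_id.add (g₀ : ℝ →ᵇ ℝ).continuous, ?_, ?_, ?_⟩, ?_⟩
    · intro x; show x + 1 + (g₀ : ℝ →ᵇ ℝ) (x + 1) = x + (g₀ : ℝ →ᵇ ℝ) x + 1
      rw [g₀.2.1 x]; ring
    · show x₀ + (g₀ : ℝ →ᵇ ℝ) x₀ = 0
      rw [g₀.2.2]; ring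
    · intro x
      show F x + (g₀ : ℝ →ᵇ ℝ) (F x) = d * (x + (g₀ : ℝ →ᵇ ℝ) x)
      have hx := (key _).mp hfix₀ x
      linear_combination hx
    · rintro Ξ' ⟨hc, hdeg, h0, hsemi⟩
      have hper : Periodic (fun x => Ξ' x - x) 1 := by
        intro x
        show Ξ' (x + 1) - (x + 1) = Ξ' x - x
        rw [hdeg]; ring
      set g' : ℝ →ᵇ ℝ := mkBCF _ (hc.sub continuous_id') hper with hg'
      have hg'S : g' ∈ S := by
        refine ⟨fun x => ?_, ?_⟩
        · show Ξ' (x + 1) - (x + 1) = Ξ' x - x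
          rw [hdeg]; ring
        · show Ξ' x₀ - x₀ = -x₀
          rw [h0]; ring
      have hg'fix : f ⟨g', hg'S⟩ = ⟨g', hg'S⟩ := by
        apply Subtype.ext
        show Φ g' = g'
        rw [key]
        intro x
        show Ξ' (F x) - F x + F x = d * ((Ξ' x - x) + x)
        rw [hsemi]; ring
      have heq : (⟨g', hg'S⟩ : S) = g₀ := hcontr.fixedPoint_unique hg'fix
      funext x
      have hval : g' x = (g₀ : ℝ →ᵇ ℝ) x := by rw [← heq]
      show Ξ' x = x + (g₀ : ℝ →ᵇ ℝ) x
      have : Ξ' x - x = (g₀ : ℝ →ᵇ ℝ) x := hval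
      linarith
end
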